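/- Let w : μ ↦ μ' be an evolutionary process between finite measures on the same measurable space, with fitness W and relative fitness U = W/E[W] of finite variance. Then w is purely selective (i.e., E[(⟨X⟩_w − X)·U] = 0 for every bounded measurable X) if and only if μ' is absolutely continuous with respect to μ with Radon–Nikodym derivative dμ'/dμ = W almost everywhere. -/

import Mathlib

/-!
The family `i ↦ w i` is a kernel whose composition with `μ` is `μ'`, so
`∫ i, ∫ X ∂(w i) ∂μ = ∫ X ∂μ'`. Since `⟨X⟩_w i * W i = ∫ X ∂(w i)` (also where `W i = 0`, for
then `w i = 0`) and `U = W / c` with `c = N' / N > 0`, the environmental change is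
`c⁻¹ (∫ X ∂μ' - ∫ X * W ∂μ) = c⁻¹ (∫ X ∂μ' - ∫ X ∂(μ.withDensity W))`. So the process is purely
selective iff the finite measures `μ'` and `μ.withDensity W` integrate all bounded measurable
functions alike, which, testing on indicators, means they are equal.
-/

open MeasureTheory ProbabilityTheory Set

section General

variable {α β E : Type*} {mα : MeasurableSpace α} {mβ : MeasurableSpace β}
  [NormedAddCommGroup E] [NormedSpace ℝ E]

theorem MeasureTheory.Measure.integral_comp {κ : Kernel α β} {μ : Measure α} {f : β → E}
    (hf : Integrable f (κ ∘ₘ μ)) :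
    ∫ y, f y ∂(κ ∘ₘ μ) = ∫ x, ∫ y, f y ∂κ x ∂μ := by
  rw [Measure.comp_eq_comp_const_apply] at hf ⊢
  rw [Kernel.integral_comp hf, Kernel.const_apply]

theorem MeasureTheory.Integrable.integral_measure_comp {κ : Kernel α β} {μ : Measure α}
    {f : β → E} (hf : Integrable f (κ ∘ₘ μ)) :
    Integrable (fun x ↦ ∫ y, f y ∂κ x) μ := by
  rw [Measure.comp_eq_comp_const_apply] at hf
  simpa only [Kernel.const_apply] using hf.integral_comp

theorem MeasureTheory.Integrable.of_bounded_measurable {μ : Measure α} [IsFiniteMeasure μ]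
    {f : α → ℝ} (hf : Measurable f) (hfb : ∃ C, ∀ x, |f x| ≤ C) : Integrable f μ :=
  let ⟨C, hC⟩ := hfb
  .of_bound hf.aestronglyMeasurable C (ae_of_all _ hC)

theorem MeasureTheory.Measure.ext_iff_forall_integral_of_bounded {μ ν : Measure α}
    [IsFiniteMeasure μ] [IsFiniteMeasure ν] :
    μ = ν ↔ ∀ f : α → ℝ, Measurable f → (∃ C, ∀ x, |f x| ≤ C) →
      ∫ x, f x ∂μ = ∫ x, f x ∂ν := by
  refine ⟨by rintro rfl _ _ _; rfl, fun h ↦ Measure.ext fun s hs ↦ ?_⟩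
  have hbounded : ∃ C, ∀ x, |s.indicator (1 : α → ℝ) x| ≤ C :=
    ⟨1, fun x ↦ by by_cases hx : x ∈ s <;> simp [hx]⟩
  have := h _ (measurable_one.indicator hs) hbounded
  rwa [integral_indicator_one hs, integral_indicator_one hs,
    measureReal_eq_measureReal_iff] at this

theorem integral_div_toReal_measure_univ_mul (μ : Measure α) [IsFiniteMeasure μ] (f : α → ℝ) :
    (∫ x, f x ∂μ) / (μ univ).toReal * (μ univ).toReal = ∫ x, f x ∂μ := by
  rcases eq_or_ne μ 0 with rfl | hμ
  · simp
  · exact div_mul_cancel₀ _ (ENNReal.toReal_pos (by simpa using hμ) (measure_ne_top _ _)).ne'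

theorem integral_withDensity_ofReal_eq_integral_mul {μ : Measure α} {g : α → ℝ}
    (hg : Measurable g) (hg0 : ∀ x, 0 ≤ g x) (f : α → ℝ) :
    ∫ x, f x ∂μ.withDensity (fun x ↦ ENNReal.ofReal (g x)) = ∫ x, f x * g x ∂μ := by
  refine (integral_withDensity_eq_integral_smul (f := fun x ↦ (g x).toNNReal)
    hg.real_toNNReal f).trans (integral_congr_ae (ae_of_all _ fun x ↦ ?_))
  simp [NNReal.smul_def, Real.coe_toNNReal _ (hg0 x), mul_comm]

theorem ProbabilityTheory.Kernel.integrable_toReal_measure_univ (κ : Kernel α β) (μ : Measure α)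
    [IsFiniteMeasure (κ ∘ₘ μ)] : Integrable (fun a ↦ (κ a univ).toReal) μ := by
  refine integrable_toReal_of_lintegral_ne_top (κ.measurable_coe .univ).aemeasurable ?_
  rw [← Measure.bind_apply .univ κ.aemeasurable]
  exact measure_ne_top _ _

theorem integral_div_toReal_measure_univ_sub_mul (κ : Kernel α α) (μ : Measure α)
    [∀ a, IsFiniteMeasure (κ a)] [IsFiniteMeasure (κ ∘ₘ μ)] {f : α → ℝ} (hf : Measurable f)
    (hfb : ∃ C, ∀ x, |f x| ≤ C) :
    ∫ a, ((∫ y, f y ∂κ a) / (κ a univ).toReal - f a) * (κ a univ).toReal ∂μ =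
      ∫ y, f y ∂(κ ∘ₘ μ) - ∫ a, f a ∂μ.withDensity (fun a ↦ ENNReal.ofReal (κ a univ).toReal) := by
  have hf_comp : Integrable f (κ ∘ₘ μ) := .of_bounded_measurable hf hfb
  obtain ⟨C, hC⟩ := hfb
  have hf_mass : Integrable (fun a ↦ f a * (κ a univ).toReal) μ :=
    (κ.integrable_toReal_measure_univ μ).bdd_mul hf.aestronglyMeasurable (ae_of_all _ hC)
  rw [integral_withDensity_ofReal_eq_integral_mul
      ((κ.measurable_coe .univ).ennreal_toReal) (fun _ ↦ ENNReal.toReal_nonneg),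
    Measure.integral_comp hf_comp, ← integral_sub hf_comp.integral_measure_comp hf_mass]
  simp only [sub_mul, integral_div_toReal_measure_univ_mul]

end General

theorem purely_selective_iff_absolutely_continuous_general
    {I : Type*} [MeasurableSpace I]
    (μ μ' : Measure I) [IsFiniteMeasure μ']
    (hN : 0 < (μ univ).toReal) (hN' : 0 < (μ' univ).toReal)
    (w : I → Measure I) (hwfin : ∀ i, IsFiniteMeasure (w i))
    (hwm : ∀ B : Set I, MeasurableSet B → Measurable fun i => w i B)
    (hdis : ∀ B : Set I, MeasurableSet B → μ' B = ∫⁻ i, w i B ∂μ) :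
    let N := (μ univ).toReal
    let N' := (μ' univ).toReal
    let W : I → ℝ := fun i => (w i univ).toReal
    let U : I → ℝ := fun i => W i / (N' / N)
    let lavg : (I → ℝ) → I → ℝ := fun X i => (∫ y, X y ∂(w i)) / W i
    ((∀ X : I → ℝ, Measurable X → (∃ C, ∀ x, |X x| ≤ C) →
        (∫ i, (lavg X i - X i) * U i ∂μ) = 0) ↔
      μ' = μ.withDensity (fun i => ENNReal.ofReal (W i))) := by
  let κ : Kernel I I := ⟨w, Measure.measurable_of_measurable_coe w hwm⟩
  have : ∀ i, IsFiniteMeasure (κ i) := hwfin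
  obtain rfl : μ' = κ ∘ₘ μ := Measure.ext fun B hB ↦ by
    rw [hdis B hB, Measure.bind_apply hB κ.aemeasurable]
    rfl
  have : IsFiniteMeasure (μ.withDensity fun i ↦ ENNReal.ofReal (κ i univ).toReal) :=
    isFiniteMeasure_withDensity_ofReal (κ.integrable_toReal_measure_univ μ).2
  intro N N' W U lavg
  have hc : N' / N ≠ 0 := (div_pos hN' hN).ne'
  rw [Measure.ext_iff_forall_integral_of_bounded]
  refine forall₃_congr fun X hX hXb ↦ ?_
  simp only [lavg, U, mul_div_assoc']
  rw [integral_div, div_eq_zero_iff, or_iff_left hc]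
  exact (congrArg (· = 0) (integral_div_toReal_measure_univ_sub_mul κ μ hX hXb)).to_iff.trans
    sub_eq_zero

/-- A process `w : μ ↦ μ'` (on a common space) is purely selective — i.e. the
environmental change `E[(⟨X⟩_w − X)·U]` vanishes for every bounded measurable
observable `X` — if and only if `μ'` is absolutely continuous with respect to `μ`
with Radon–Nikodym density equal to the fitness `W`. -/
theorem purely_selective_iff_absolutely_continuous
    {I : Type*} [MeasurableSpace I]
    (μ μ' : Measure I) [IsFiniteMeasure μ] [IsFiniteMeasure μ']
    (hN : 0 < (μ univ).toReal) (hN' : 0 < (μ' univ).toReal)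
    (w : I → Measure I) (hwfin : ∀ i, IsFiniteMeasure (w i))
    (hwm : ∀ B : Set I, MeasurableSet B → Measurable fun i => w i B)
    (hdis : ∀ B : Set I, MeasurableSet B → μ' B = ∫⁻ i, w i B ∂μ)
    (hvar : Integrable (fun i => ((w i univ).toReal) ^ 2) μ) :
    let N := (μ univ).toReal
    let N' := (μ' univ).toReal
    let W : I → ℝ := fun i => (w i univ).toReal
    let U : I → ℝ := fun i => W i / (N' / N)
    let lavg : (I → ℝ) → I → ℝ := fun X i => (∫ y, X y ∂(w i)) / W i
    ((∀ X : I → ℝ, Measurable X → (∃ C, ∀ x, |X x| ≤ C) →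
        (∫ i, (lavg X i - X i) * U i ∂μ) = 0) ↔
      μ' = μ.withDensity (fun i => ENNReal.ofReal (W i))) :=
  purely_selective_iff_absolutely_continuous_general μ μ' hN hN' w hwfin hwm hdis
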